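/- arXiv:1105.1874 — 3 statements merged into one kernel-verified Lean document; each statement's English description precedes it below -/
import Mathlib

section
/- Let X be a bounded open subset of ℂⁿ and U ⊂ X open with closure(U) ⊂ X compact. Then there exists k < 1 such that for all a ∈ U and v ∈ ℂⁿ, E_X(a,v) ≤ k · E_U(a,v), where E denotes the infinitesimal Carathéodory metric. -/
/-!
After composing `φ : X → Δ` with the disc automorphism sending `φ a` to `0`, which can only
increase `‖Dφ(a) v‖`, we may assume `φ a = 0`. Cover `closure U` by finitely many balls of
radius `δ/4` whose `δ`-dilates lie in `X`. Schwarz–Pick along complex lines shows that `1 - ‖φ‖`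
changes by at most a factor `5` inside one ball, so on the union `W` of the balls chained to the
one containing `a` we get `‖φ‖ ≤ T := 1 - 5⁻ᴺ`, `N` being the number of balls, uniformly in `φ`
and `a`. Both `W` and `U \ W` are open, hence `φ / r` on `W` and `0` on `U \ W`, for `T < r < 1`,
competes in the definition of `E_U(a, v)`, which gives `E_X(a, v) ≤ r · E_U(a, v)`.
-/

open Metric Set Filter Topology

/-- Infinitesimal Carathéodory metric of a set `Ω` in a complex normed space:
`E_Ω(x,v) = sup {|Dφ(x)·v| : φ : Ω → Δ holomorphic}`. -/
noncomputable def caraMetric {E : Type*} [NormedAddCommGroup E] [NormedSpace ℂ E]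
    (Ω : Set E) (x v : E) : ℝ :=
  sSup {r : ℝ | ∃ φ : E → ℂ, DifferentiableOn ℂ φ Ω ∧ MapsTo φ Ω (ball 0 1) ∧
    r = ‖fderivWithin ℂ φ Ω x v‖}

open ComplexConjugate

noncomputable def blaschkeFactor (α w : ℂ) : ℂ := (w - α) / (1 - conj α * w)

section Blaschke

variable {α w : ℂ}

lemma one_sub_conj_mul_ne_zero (hα : ‖α‖ < 1) (hw : ‖w‖ ≤ 1) : 1 - conj α * w ≠ 0 := by
  refine sub_ne_zero.2 fun h => ?_
  have : ‖conj α * w‖ < 1 := by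
    rw [norm_mul, RCLike.norm_conj]
    nlinarith [norm_nonneg α, norm_nonneg w]
  rw [← h, norm_one] at this
  exact lt_irrefl _ this

lemma norm_sub_sq_add_mul_eq (α w : ℂ) :
    ‖w - α‖ ^ 2 + (1 - ‖α‖ ^ 2) * (1 - ‖w‖ ^ 2) = ‖1 - conj α * w‖ ^ 2 := by
  simp only [Complex.sq_norm, Complex.normSq_apply, Complex.sub_re, Complex.sub_im,
    Complex.mul_re, Complex.mul_im, Complex.one_re, Complex.one_im, Complex.conj_re,
    Complex.conj_im]
  ring

@[simp]
lemma blaschkeFactor_self (α : ℂ) : blaschkeFactor α α = 0 := by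
  simp [blaschkeFactor]

lemma blaschkeFactor_neg_blaschkeFactor (hα : ‖α‖ < 1) (hw : ‖w‖ ≤ 1) :
    blaschkeFactor (-α) (blaschkeFactor α w) = w := by
  have hD := one_sub_conj_mul_ne_zero hα hw
  have hα' := one_sub_conj_mul_ne_zero hα hα.le
  have hnum : (w - α) / (1 - conj α * w) + α = w * (1 - conj α * α) / (1 - conj α * w) := by
    rw [div_add' _ _ _ hD]
    ring
  have hden : 1 - conj (-α) * ((w - α) / (1 - conj α * w)) =
      (1 - conj α * α) / (1 - conj α * w) := by
    rw [map_neg, neg_mul, sub_neg_eq_add, mul_div_assoc', add_div' _ _ _ hD]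
    ring
  rw [blaschkeFactor, blaschkeFactor, sub_neg_eq_add, hnum, hden, div_div_div_cancel_right₀ hD,
    mul_div_assoc, div_self hα', mul_one]

lemma norm_blaschkeFactor_le (hα : ‖α‖ ≤ 1) (hw : ‖w‖ ≤ 1) :
    ‖blaschkeFactor α w‖ ≤ (‖α‖ + ‖w‖) / (1 + ‖α‖ * ‖w‖) := by
  have hid := norm_sub_sq_add_mul_eq α w
  have hD : ‖1 - conj α * w‖ ≤ 1 + ‖α‖ * ‖w‖ :=
    (norm_sub_le _ _).trans (by rw [norm_one, norm_mul, RCLike.norm_conj])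
  rw [blaschkeFactor, norm_div]
  rcases (norm_nonneg (1 - conj α * w)).eq_or_lt with hD0 | hDpos
  · rw [← hD0, div_zero]
    positivity
  rw [div_le_div_iff₀ hDpos (by positivity),
    ← pow_le_pow_iff_left₀ (by positivity) (by positivity) two_ne_zero]
  have hc : 0 ≤ (1 - ‖α‖ ^ 2) * (1 - ‖w‖ ^ 2) := by
    apply mul_nonneg <;> nlinarith [norm_nonneg α, norm_nonneg w]
  have hD2 : ‖1 - conj α * w‖ ^ 2 ≤ (1 + ‖α‖ * ‖w‖) ^ 2 :=
    pow_le_pow_left₀ hDpos.le hD 2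
  nlinarith [mul_le_mul_of_nonneg_left hD2 hc]

lemma norm_blaschkeFactor_lt_one (hα : ‖α‖ < 1) (hw : ‖w‖ < 1) : ‖blaschkeFactor α w‖ < 1 := by
  refine (norm_blaschkeFactor_le hα.le hw.le).trans_lt ?_
  rw [div_lt_one (by positivity)]
  nlinarith [mul_pos (sub_pos.2 hα) (sub_pos.2 hw)]

lemma mapsTo_blaschkeFactor (hα : ‖α‖ < 1) : MapsTo (blaschkeFactor α) (ball 0 1) (ball 0 1) :=
  fun _ hw => mem_ball_zero_iff.2 (norm_blaschkeFactor_lt_one hα (mem_ball_zero_iff.1 hw))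

lemma hasDerivAt_blaschkeFactor (hw : 1 - conj α * w ≠ 0) :
    HasDerivAt (blaschkeFactor α) ((1 - conj α * α) / (1 - conj α * w) ^ 2) w := by
  have hnum : HasDerivAt (fun z => z - α) 1 w := (hasDerivAt_id w).sub_const α
  have hden : HasDerivAt (fun z => 1 - conj α * z) (-conj α) w := by
    simpa using ((hasDerivAt_id w).const_mul (conj α)).const_sub 1
  refine (hnum.div hden hw).congr_deriv ?_
  ring

lemma differentiableOn_blaschkeFactor (hα : ‖α‖ < 1) :
    DifferentiableOn ℂ (blaschkeFactor α) (ball 0 1) := fun _ hw =>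
  (hasDerivAt_blaschkeFactor (one_sub_conj_mul_ne_zero hα
    (mem_ball_zero_iff.1 hw).le)).differentiableAt.differentiableWithinAt

lemma one_le_norm_deriv_blaschkeFactor_self (hα : ‖α‖ < 1) :
    1 ≤ ‖deriv (blaschkeFactor α) α‖ := by
  have hD := one_sub_conj_mul_ne_zero hα hα.le
  rw [(hasDerivAt_blaschkeFactor hD).deriv, sq, div_mul_cancel_left₀ hD, norm_inv,
    one_le_inv₀ (norm_pos_iff.2 hD), Complex.conj_mul', ← Complex.ofReal_pow,
    ← Complex.ofReal_one, ← Complex.ofReal_sub, Complex.norm_real, Real.norm_eq_abs,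
    abs_of_pos (by nlinarith [norm_nonneg α])]
  nlinarith [norm_nonneg α]

lemma one_sub_norm_mul_le_of_norm_blaschkeFactor_le {s : ℝ} (hα : ‖α‖ < 1) (hw : ‖w‖ < 1)
    (hs : ‖blaschkeFactor α w‖ ≤ s) : (1 - ‖α‖) * (1 - s) ≤ (1 + s) * (1 - ‖w‖) := by
  set u := blaschkeFactor α w
  have hu : ‖u‖ < 1 := norm_blaschkeFactor_lt_one hα hw
  have hwu : ‖w‖ ≤ (‖α‖ + ‖u‖) / (1 + ‖α‖ * ‖u‖) := by
    have h := norm_blaschkeFactor_le (α := -α) (w := u) (by rw [norm_neg]; exact hα.le) hu.le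
    rwa [blaschkeFactor_neg_blaschkeFactor hα hw.le, norm_neg] at h
  have hpq : 0 < 1 + ‖α‖ * ‖u‖ := by positivity
  have hw' : (1 - ‖α‖) * (1 - ‖u‖) ≤ (1 + ‖α‖ * ‖u‖) * (1 - ‖w‖) := by
    rw [le_div_iff₀ hpq] at hwu
    linarith
  have hp := norm_nonneg α
  have hq := norm_nonneg u
  have hus : ‖u‖ ≤ s := hs
  -- `(1 + s)(1 - q) - (1 - s)(1 + pq) = (s - q)(2 - q + pq) + q(1 - q)(1 - p)`
  have key : (1 - ‖α‖) * (1 - s) * (1 + ‖α‖ * ‖u‖) ≤ (1 + s) * ((1 - ‖α‖) * (1 - ‖u‖)) := by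
    have h1 : 0 ≤ (s - ‖u‖) * (2 - ‖u‖ + ‖α‖ * ‖u‖) := mul_nonneg (by linarith) (by nlinarith)
    have h2 : 0 ≤ ‖u‖ * (1 - ‖u‖) * (1 - ‖α‖) := by
      have := sub_pos.2 hu; have := sub_pos.2 hα; positivity
    nlinarith [mul_nonneg (sub_nonneg.2 hα.le) (add_nonneg h1 h2)]
  have := mul_le_mul_of_nonneg_left hw' (by linarith : 0 ≤ 1 + s)
  nlinarith

end Blaschke

lemma norm_blaschkeFactor_le_div_of_mapsTo_ball {f : ℂ → ℂ} {c z : ℂ} {R : ℝ}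
    (hd : DifferentiableOn ℂ f (ball c R)) (hm : MapsTo f (ball c R) (ball 0 1))
    (hz : z ∈ ball c R) : ‖blaschkeFactor (f c) (f z)‖ ≤ dist z c / R := by
  have hfc : ‖f c‖ < 1 := mem_ball_zero_iff.1 (hm (mem_ball_self (pos_of_mem_ball hz)))
  have hgm : MapsTo (blaschkeFactor (f c) ∘ f) (ball c R)
      (closedBall ((blaschkeFactor (f c) ∘ f) c) 1) := by
    rw [Function.comp_apply, blaschkeFactor_self]
    exact ((mapsTo_blaschkeFactor hfc).comp hm).mono_right ball_subset_closedBall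
  have h := Complex.dist_le_div_mul_dist_of_mapsTo_ball
    ((differentiableOn_blaschkeFactor hfc).comp hd hm) hgm hz
  rwa [Function.comp_apply, Function.comp_apply, blaschkeFactor_self, dist_zero_right,
    one_div_mul_eq_div] at h

def intersectionGraph {ι α : Type*} (B : ι → Set α) : SimpleGraph ι :=
  SimpleGraph.fromRel fun i j => (B i ∩ B j).Nonempty

section IntersectionGraph

variable {ι α : Type*} {B : ι → Set α}

lemma reachable_intersectionGraph_of_nonempty {i j : ι} (h : (B i ∩ B j).Nonempty) :
    (intersectionGraph B).Reachable i j := by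
  by_cases hij : i = j
  · exact hij ▸ SimpleGraph.Reachable.refl i
  · exact ((SimpleGraph.fromRel_adj _ i j).2 ⟨hij, Or.inl h⟩).reachable

lemma isOpen_diff_iUnion_reachable [TopologicalSpace α] (hB : ∀ i, IsOpen (B i)) {U : Set α}
    (hU : IsOpen U) (hUB : U ⊆ ⋃ i, B i) (i₀ : ι) :
    IsOpen (U \ ⋃ (j) (_ : (intersectionGraph B).Reachable i₀ j), B j) := by
  refine isOpen_iff_mem_nhds.2 fun z ⟨hzU, hzW⟩ => ?_
  obtain ⟨j, hzj⟩ := mem_iUnion.1 (hUB hzU)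
  have hj : ¬ (intersectionGraph B).Reachable i₀ j := fun h => hzW (mem_iUnion₂.2 ⟨j, h, hzj⟩)
  refine mem_of_superset (inter_mem (hU.mem_nhds hzU) ((hB j).mem_nhds hzj)) ?_
  rintro y ⟨hyU, hyj⟩
  refine ⟨hyU, fun hyW => hj ?_⟩
  obtain ⟨k, hk, hyk⟩ := mem_iUnion₂.1 hyW
  exact hk.trans (reachable_intersectionGraph_of_nonempty ⟨y, hyk, hyj⟩)

lemma le_pow_mul_of_walk {f : α → ℝ} {c : ℝ} (hc : 0 ≤ c)
    (hf : ∀ i, ∀ w ∈ B i, ∀ z ∈ B i, f w ≤ c * f z) {i j : ι}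
    (p : (intersectionGraph B).Walk i j) {w z : α} (hw : w ∈ B i) (hz : z ∈ B j) :
    f w ≤ c ^ (p.length + 1) * f z := by
  induction p generalizing w with
  | nil => simpa using hf _ w hw z hz
  | @cons i k j hadj p ih =>
    obtain ⟨y, hyi, hyk⟩ : (B i ∩ B k).Nonempty := by
      rcases ((SimpleGraph.fromRel_adj _ i k).1 hadj).2 with h | h
      · exact h
      · rwa [inter_comm]
    calc f w ≤ c * f y := hf i w hw y hyi
      _ ≤ c * (c ^ (p.length + 1) * f z) := mul_le_mul_of_nonneg_left (ih hyk hz) hc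
      _ = c ^ ((p.cons hadj).length + 1) * f z := by
        rw [SimpleGraph.Walk.length_cons]
        ring

lemma le_pow_card_mul_of_reachable [Fintype ι] {f : α → ℝ} {c : ℝ} (hc : 1 ≤ c)
    (hf : ∀ i, ∀ w ∈ B i, ∀ z ∈ B i, f w ≤ c * f z) (hf₀ : ∀ i, ∀ z ∈ B i, 0 ≤ f z) {i j : ι}
    (h : (intersectionGraph B).Reachable i j) {w z : α} (hw : w ∈ B i) (hz : z ∈ B j) :
    f w ≤ c ^ Fintype.card ι * f z := by
  classical
  obtain ⟨p, hp⟩ := h.exists_isPath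
  calc f w ≤ c ^ (p.length + 1) * f z := le_pow_mul_of_walk (by linarith) hf p hw hz
    _ ≤ c ^ Fintype.card ι * f z :=
      mul_le_mul_of_nonneg_right (pow_le_pow_right₀ hc hp.length_lt) (hf₀ j z hz)

end IntersectionGraph

section NormedSpace

variable {E : Type*} [NormedAddCommGroup E] [NormedSpace ℂ E]

lemma mapsTo_add_smul_ball {x w u : E} {r R : ℝ} (h : dist w x + R * ‖u‖ < r) :
    MapsTo (fun t : ℂ => w + t • u) (ball 0 R) (ball x r) := by
  intro t ht
  rw [mem_ball_zero_iff] at ht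
  rw [mem_ball]
  calc dist (w + t • u) x ≤ dist w x + ‖t • u‖ := by
        rw [dist_eq_norm, dist_eq_norm, add_sub_right_comm]
        exact norm_add_le _ _
    _ ≤ dist w x + R * ‖u‖ := by
        rw [norm_smul]
        gcongr
    _ < r := h

lemma one_sub_norm_le_five_mul {ψ : E → ℂ} {x w z : E} {δ : ℝ}
    (hd : DifferentiableOn ℂ ψ (ball x δ)) (hm : MapsTo ψ (ball x δ) (ball 0 1))
    (hw : w ∈ ball x (δ / 4)) (hz : z ∈ ball x (δ / 4)) :
    1 - ‖ψ w‖ ≤ 5 * (1 - ‖ψ z‖) := by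
  have hzw : ‖z - w‖ < δ / 2 := by
    rw [← dist_eq_norm]
    linarith [dist_triangle_right z w x, mem_ball.1 hw, mem_ball.1 hz]
  have hline : MapsTo (fun t : ℂ => w + t • (z - w)) (ball 0 (3 / 2)) (ball x δ) :=
    mapsTo_add_smul_ball (by linarith [mem_ball.1 hw])
  -- Schwarz–Pick on the line through `w` and `z` gives `‖blaschkeFactor (ψ w) (ψ z)‖ ≤ 2/3`,
  -- and `5 = (1 + 2/3) / (1 - 2/3)`.
  have hpick := norm_blaschkeFactor_le_div_of_mapsTo_ball
    (hd.comp (by fun_prop) hline) (hm.comp hline) (z := 1) (by norm_num)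
  simp only [Function.comp_apply, zero_smul, add_zero, one_smul, add_sub_cancel,
    dist_zero_right, norm_one] at hpick
  have hwz : ‖ψ w‖ < 1 ∧ ‖ψ z‖ < 1 := by
    have hsub : ball x (δ / 4) ⊆ ball x δ := ball_subset_ball (by linarith [pos_of_mem_ball hw])
    exact ⟨mem_ball_zero_iff.1 (hm (hsub hw)), mem_ball_zero_iff.1 (hm (hsub hz))⟩
  have := one_sub_norm_mul_le_of_norm_blaschkeFactor_le hwz.1 hwz.2 hpick
  norm_num at this
  linarith

lemma norm_fderiv_apply_le_of_mapsTo_ball {φ : E → ℂ} {a : E} {ε : ℝ} (hε : 0 < ε)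
    (hd : DifferentiableOn ℂ φ (ball a ε)) (hm : MapsTo φ (ball a ε) (ball 0 1)) (v : E) :
    ‖fderiv ℂ φ a v‖ ≤ 2 * (‖v‖ + 1) / ε := by
  set R := ε / (‖v‖ + 1)
  have hR : 0 < R := by positivity
  have hline : MapsTo (fun t : ℂ => a + t • v) (ball 0 R) (ball a ε) := by
    refine mapsTo_add_smul_ball ?_
    rw [dist_self, zero_add, div_mul_eq_mul_div, div_lt_iff₀ (by positivity)]
    nlinarith
  have hgm : MapsTo (φ ∘ fun t : ℂ => a + t • v) (ball 0 R)
      (closedBall ((φ ∘ fun t : ℂ => a + t • v) 0) 2) := by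
    intro t ht
    rw [mem_closedBall, dist_eq_norm, Function.comp_apply, Function.comp_apply]
    have h1 := mem_ball_zero_iff.1 (hm (hline ht))
    have h2 := mem_ball_zero_iff.1 (hm (hline (mem_ball_self hR)))
    linarith [norm_sub_le (φ (a + t • v)) (φ (a + (0 : ℂ) • v))]
  have hcauchy := Complex.norm_deriv_le_div_of_mapsTo_ball (hd.comp (by fun_prop) hline) hgm hR
  have hderiv : HasDerivAt (φ ∘ fun t : ℂ => a + t • v) (fderiv ℂ φ a v) 0 := by
    have hφ : HasFDerivAt φ (fderiv ℂ φ a) (a + (0 : ℂ) • v) := by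
      rw [zero_smul, add_zero]
      exact (hd.differentiableAt (ball_mem_nhds a hε)).hasFDerivAt
    simpa using hφ.comp_hasDerivAt (0 : ℂ) (((hasDerivAt_id (0 : ℂ)).smul_const v).const_add a)
  rwa [hderiv.deriv, div_div_eq_mul_div] at hcauchy

lemma le_caraMetric {Ω : Set E} (hΩ : IsOpen Ω) {x : E} (hx : x ∈ Ω) {φ : E → ℂ}
    (hd : DifferentiableOn ℂ φ Ω) (hm : MapsTo φ Ω (ball 0 1)) (v : E) :
    ‖fderivWithin ℂ φ Ω x v‖ ≤ caraMetric Ω x v := by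
  obtain ⟨ε, hε, hball⟩ := Metric.isOpen_iff.1 hΩ x hx
  refine le_csSup ⟨2 * (‖v‖ + 1) / ε, ?_⟩ ⟨φ, hd, hm, rfl⟩
  rintro _ ⟨ψ, hψd, hψm, rfl⟩
  rw [fderivWithin_of_isOpen hΩ hx]
  exact norm_fderiv_apply_le_of_mapsTo_ball hε (hψd.mono hball) (hψm.mono_left hball) v

lemma caraMetric_le {Ω : Set E} {x v : E} {c : ℝ}
    (h : ∀ φ : E → ℂ, DifferentiableOn ℂ φ Ω → MapsTo φ Ω (ball 0 1) →
      ‖fderivWithin ℂ φ Ω x v‖ ≤ c) :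
    caraMetric Ω x v ≤ c := by
  refine csSup_le ⟨_, 0, differentiableOn_const 0, fun _ _ => mem_ball_self one_pos, rfl⟩ ?_
  rintro _ ⟨φ, hd, hm, rfl⟩
  exact h φ hd hm

lemma norm_fderiv_apply_le_mul_caraMetric {U W : Set E} (hU : IsOpen U) (hW : IsOpen W)
    (hUW : IsOpen (U \ W)) {a : E} (haU : a ∈ U) (haW : a ∈ W) {ψ : E → ℂ} {T r : ℝ}
    (hd : DifferentiableOn ℂ ψ W) (hψ : ∀ z ∈ W, ‖ψ z‖ ≤ T) (hTr : T < r) (v : E) :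
    ‖fderiv ℂ ψ a v‖ ≤ r * caraMetric U a v := by
  classical
  have hr : 0 < r := ((norm_nonneg _).trans (hψ a haW)).trans_lt hTr
  have hrC : ‖(r : ℂ)⁻¹‖ = r⁻¹ := by
    rw [norm_inv, Complex.norm_real, Real.norm_of_nonneg hr.le]
  set φ : E → ℂ := fun z => if z ∈ W then (r : ℂ)⁻¹ * ψ z else 0
  have hφW : ∀ z ∈ W, φ =ᶠ[𝓝 z] fun y => (r : ℂ)⁻¹ * ψ y := fun z hz =>
    eventually_of_mem (hW.mem_nhds hz) fun y hy => if_pos hy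
  have hφd : DifferentiableOn ℂ φ U := by
    intro z hzU
    refine DifferentiableAt.differentiableWithinAt ?_
    by_cases hzW : z ∈ W
    · exact ((hd.differentiableAt (hW.mem_nhds hzW)).const_mul _).congr_of_eventuallyEq
        (hφW z hzW)
    · exact (differentiableAt_const 0).congr_of_eventuallyEq
        (eventually_of_mem (hUW.mem_nhds ⟨hzU, hzW⟩) fun y hy => if_neg hy.2)
  have hφm : MapsTo φ U (ball 0 1) := by
    intro z _
    rw [mem_ball_zero_iff]
    by_cases hzW : z ∈ W
    · simp only [φ, if_pos hzW, norm_mul, hrC]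
      rw [inv_mul_lt_iff₀ hr, mul_one]
      exact (hψ z hzW).trans_lt hTr
    · simp [φ, if_neg hzW]
  have hφa : HasFDerivAt φ ((r : ℂ)⁻¹ • fderiv ℂ ψ a) a :=
    ((hd.differentiableAt (hW.mem_nhds haW)).hasFDerivAt.const_mul _).congr_of_eventuallyEq
      (hφW a haW)
  calc ‖fderiv ℂ ψ a v‖ = r * ‖fderivWithin ℂ φ U a v‖ := by
        rw [fderivWithin_of_isOpen hU haU, hφa.fderiv, smul_apply, norm_smul,
          hrC, mul_inv_cancel_left₀ hr.ne']
    _ ≤ r * caraMetric U a v := mul_le_mul_of_nonneg_left (le_caraMetric hU haU hφd hφm v) hr.le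

lemma norm_fderiv_apply_le_norm_fderiv_blaschkeFactor_comp {φ : E → ℂ} {a : E}
    (hd : DifferentiableAt ℂ φ a) (ha : ‖φ a‖ < 1) (v : E) :
    ‖fderiv ℂ φ a v‖ ≤ ‖fderiv ℂ (blaschkeFactor (φ a) ∘ φ) a v‖ := by
  have hB : HasDerivAt (blaschkeFactor (φ a)) (deriv (blaschkeFactor (φ a)) (φ a)) (φ a) :=
    (hasDerivAt_blaschkeFactor (one_sub_conj_mul_ne_zero ha ha.le)).differentiableAt.hasDerivAt
  rw [(hB.comp_hasFDerivAt a hd.hasFDerivAt).fderiv, smul_apply, norm_smul]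
  exact le_mul_of_one_le_left (norm_nonneg _) (one_le_norm_deriv_blaschkeFactor_self ha)

theorem exists_lt_one_forall_norm_le_of_isCompact {X K U : Set E} (hX : IsOpen X)
    (hK : IsCompact K) (hKX : K ⊆ X) (hU : IsOpen U) (hUK : U ⊆ K) :
    ∃ T < 1, ∀ a ∈ K, ∃ W, IsOpen W ∧ a ∈ W ∧ W ⊆ X ∧ IsOpen (U \ W) ∧
      ∀ ψ : E → ℂ, DifferentiableOn ℂ ψ X → MapsTo ψ X (ball 0 1) → ψ a = 0 →
        ∀ z ∈ W, ‖ψ z‖ ≤ T := by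
  obtain ⟨δ, hδ, hthick⟩ := hK.exists_thickening_subset_open hX hKX
  obtain ⟨t, htK, hcover⟩ := hK.elim_nhds_subcover (fun x => ball x (δ / 4))
    fun x _ => ball_mem_nhds x (by positivity)
  set B : t → Set E := fun j => ball (j : E) (δ / 4)
  have hBX : ∀ j : t, ball (j : E) δ ⊆ X := fun j =>
    (ball_subset_thickening (htK j j.2) δ).trans hthick
  have hB : ∀ j : t, B j ⊆ ball (j : E) δ := fun j => ball_subset_ball (by linarith)
  have hKB : K ⊆ ⋃ j, B j := by
    simpa [B, iUnion_subtype] using hcover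
  refine ⟨1 - (5 ^ Fintype.card t)⁻¹, by simp, fun a ha => ?_⟩
  obtain ⟨i₀, hai₀⟩ := mem_iUnion.1 (hKB ha)
  refine ⟨⋃ (j) (_ : (intersectionGraph B).Reachable i₀ j), B j,
    isOpen_biUnion fun _ _ => isOpen_ball, mem_iUnion₂.2 ⟨i₀, .refl i₀, hai₀⟩,
    iUnion₂_subset fun j _ => (hB j).trans (hBX j),
    isOpen_diff_iUnion_reachable (fun _ => isOpen_ball) hU (hUK.trans hKB) i₀, ?_⟩
  intro ψ hψd hψm hψa z hz
  obtain ⟨j, hj, hzj⟩ := mem_iUnion₂.1 hz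
  have hharnack : ∀ i, ∀ w ∈ B i, ∀ z ∈ B i, 1 - ‖ψ w‖ ≤ 5 * (1 - ‖ψ z‖) :=
    fun i _ hw _ hz => one_sub_norm_le_five_mul (hψd.mono (hBX i)) (hψm.mono_left (hBX i)) hw hz
  have hpos : ∀ i, ∀ z ∈ B i, 0 ≤ 1 - ‖ψ z‖ := fun i z hz =>
    sub_nonneg.2 (mem_ball_zero_iff.1 (hψm (hBX i (hB i hz)))).le
  have h := le_pow_card_mul_of_reachable (f := fun z => 1 - ‖ψ z‖) (by norm_num) hharnack hpos hj
    hai₀ hzj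
  rw [hψa, norm_zero, sub_zero, ← inv_le_iff_one_le_mul₀' (by positivity)] at h
  linarith

end NormedSpace

theorem caratheodory_metric_contraction_general {n : ℕ} (X U : Set (Fin n → ℂ))
    (hXo : IsOpen X)
    (hUo : IsOpen U) (hUX : closure U ⊆ X) (hUc : IsCompact (closure U)) :
    ∃ k : ℝ, k < 1 ∧ ∀ a ∈ U, ∀ v : Fin n → ℂ,
      caraMetric X a v ≤ k * caraMetric U a v := by
  obtain ⟨T, hT, hW⟩ := exists_lt_one_forall_norm_le_of_isCompact hXo hUc hUX hUo subset_closure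
  refine ⟨(T + 1) / 2, by linarith, fun a ha v => caraMetric_le fun φ hφd hφm => ?_⟩
  obtain ⟨W, hWo, haW, hWX, hUW, hψW⟩ := hW a (subset_closure ha)
  have haX : a ∈ X := hUX (subset_closure ha)
  have hα : ‖φ a‖ < 1 := mem_ball_zero_iff.1 (hφm haX)
  set ψ := blaschkeFactor (φ a) ∘ φ
  have hψd : DifferentiableOn ℂ ψ X := (differentiableOn_blaschkeFactor hα).comp hφd hφm
  have hψm : MapsTo ψ X (ball 0 1) := (mapsTo_blaschkeFactor hα).comp hφm
  calc ‖fderivWithin ℂ φ X a v‖ = ‖fderiv ℂ φ a v‖ := by rw [fderivWithin_of_isOpen hXo haX]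
    _ ≤ ‖fderiv ℂ ψ a v‖ := norm_fderiv_apply_le_norm_fderiv_blaschkeFactor_comp
        (hφd.differentiableAt (hXo.mem_nhds haX)) hα v
    _ ≤ (T + 1) / 2 * caraMetric U a v := norm_fderiv_apply_le_mul_caraMetric hUo hWo hUW ha haW
        (hψd.mono hWX) (hψW ψ hψd hψm (blaschkeFactor_self _)) (by linarith) v

/-- Let `X` be a bounded open subset of `ℂⁿ` and `U ⊂ X` open with `closure U ⊆ X` compact.
Then there exists `k < 1` such that `E_X(a,v) ≤ k · E_U(a,v)` for all `a ∈ U`, `v ∈ ℂⁿ`. -/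
theorem caratheodory_metric_contraction {n : ℕ} (X U : Set (Fin n → ℂ))
    (hXo : IsOpen X) (hXb : Bornology.IsBounded X)
    (hUo : IsOpen U) (hUX : closure U ⊆ X) (hUc : IsCompact (closure U)) :
    ∃ k : ℝ, k < 1 ∧ ∀ a ∈ U, ∀ v : Fin n → ℂ,
      caraMetric X a v ≤ k * caraMetric U a v :=
  caratheodory_metric_contraction_general X U hXo hUo hUX hUc
end

section
/- Let M be a closed complex submanifold of ℂᴺ, W ⊇ M an open neighborhood admitting a holomorphic retraction ρ : W → M, X ⊂ M a domain, and U ⊂ X relatively compact. Suppose R > 0 satisfies U ⊂ B(x,R) for all x ∈ U, and r > 0 satisfies B(x,r) ⊂ W and ρ(B(x,r)) ⊂ X for all x ∈ U. Then for every holomorphic φ : Δ → U with φ(0) = a, the map ψ(ζ) = ρ((1 + r/R)(φ(ζ) − φ(0)) + φ(0)) is a well-defined holomorphic map Δ → X with ψ(0) = a and ψ'(0) = (1 + r/R)·φ'(0); consequently F_X(a,v) ≤ (1 + r/R)⁻¹ · F_U(a,v) for all a ∈ U and v. -/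
open Metric Set Filter Topology

/-- Infinitesimal Kobayashi (Royden–Kobayashi) metric of a set `Ω` in a complex normed space:
`F_Ω(x,v) = inf {|λ| : ∃ φ : Δ → Ω holomorphic, φ(0) = x, λ·φ'(0) = v}`. -/
noncomputable def kobMetric {E : Type*} [NormedAddCommGroup E] [NormedSpace ℂ E]
    (Ω : Set E) (x v : E) : ℝ :=
  sInf {r : ℝ | ∃ φ : ℂ → E, DifferentiableOn ℂ φ (ball 0 1) ∧ MapsTo φ (ball 0 1) Ω ∧
    φ 0 = x ∧ ∃ lam : ℂ, r = ‖lam‖ ∧ lam • fderivWithin ℂ φ (ball 0 1) 0 1 = v}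

/-!
Dilating a disc `φ : Δ → U` about its centre by the factor `c = 1 + r/R` moves each point
`φ ζ` by `(r/R)‖φ ζ - φ 0‖ < r`, so the dilated disc stays in the `r`-neighbourhood of `U`,
where `ρ` is holomorphic and lands in `X`. Since `ρ` fixes `U ⊆ M`, the chain rule gives
`(ρ ∘ dilation ∘ φ)'(0) = c φ'(0)`, and every competitor `(φ, λ)` for `F_U(a, v)` yields the
competitor `(ρ ∘ dilation ∘ φ, λ / c)` for `F_X(a, v)`.
-/

section Dilation

variable {𝕜 E : Type*} [NontriviallyNormedField 𝕜] [NormedAddCommGroup E] [NormedSpace 𝕜 E]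

theorem dist_smul_sub_add_self (c : 𝕜) (p y : E) :
    dist (c • (y - p) + p) y = ‖1 - c‖ * dist p y :=
  dist_homothety_self p y c

theorem fderiv_comp_smul_sub_add_of_eventuallyEq {F : Type*} [NormedAddCommGroup F]
    [NormedSpace 𝕜 F] {ρ : E → E} {φ : F → E} {z : F} (c : 𝕜)
    (hρ : DifferentiableAt 𝕜 ρ (φ z)) (hφ : DifferentiableAt 𝕜 φ z) (hfix : ρ ∘ φ =ᶠ[𝓝 z] φ) :
    fderiv 𝕜 (fun ζ => ρ (c • (φ ζ - φ z) + φ z)) z = c • fderiv 𝕜 φ z := by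
  have hdil : HasFDerivAt (fun ζ => c • (φ ζ - φ z) + φ z) (c • fderiv 𝕜 φ z) z :=
    ((hφ.hasFDerivAt.sub_const (φ z)).const_smul c).add_const (φ z)
  have hρ' : HasFDerivAt ρ (fderiv 𝕜 ρ (φ z)) (c • (φ z - φ z) + φ z) := by
    simpa using hρ.hasFDerivAt
  have hchain : (fderiv 𝕜 ρ (φ z)).comp (fderiv 𝕜 φ z) = fderiv 𝕜 φ z := by
    rw [← fderiv_comp z hρ hφ]; exact hfix.fderiv_eq
  calc fderiv 𝕜 (fun ζ => ρ (c • (φ ζ - φ z) + φ z)) z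
        = (fderiv 𝕜 ρ (φ z)).comp (c • fderiv 𝕜 φ z) := (hρ'.comp z hdil).fderiv
    _ = c • fderiv 𝕜 φ z := by rw [ContinuousLinearMap.comp_smul, hchain]

end Dilation

theorem smul_sub_add_mem_ball {E : Type*} [NormedAddCommGroup E] [NormedSpace ℂ E] {p y : E}
    {r R : ℝ} (hr : 0 < r) (hR : 0 < R) (hy : dist p y < R) :
    ((1 + r / R : ℝ) : ℂ) • (y - p) + p ∈ ball y r := by
  have hc : ‖1 - ((1 + r / R : ℝ) : ℂ)‖ = r / R := by
    rw [← Complex.ofReal_one, ← Complex.ofReal_sub, Complex.norm_real, Real.norm_eq_abs,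
      sub_add_cancel_left, abs_neg, abs_of_pos (div_pos hr hR)]
  rw [mem_ball, dist_smul_sub_add_self, hc]
  calc r / R * dist p y < r / R * R := by gcongr
    _ = r := div_mul_cancel₀ r hR.ne'

section Kobayashi

variable {E : Type*} [NormedAddCommGroup E] [NormedSpace ℂ E] {Ω Ω' : Set E} {x v : E}

theorem kobMetric_le_norm {φ : ℂ → E} (hφ : DifferentiableOn ℂ φ (ball 0 1))
    (hφΩ : MapsTo φ (ball 0 1) Ω) (hφ0 : φ 0 = x) {lam : ℂ}
    (hlam : lam • fderivWithin ℂ φ (ball 0 1) 0 1 = v) : kobMetric Ω x v ≤ ‖lam‖ :=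
  csInf_le ⟨0, by rintro _ ⟨-, -, -, -, lam, rfl, -⟩; positivity⟩ ⟨φ, hφ, hφΩ, hφ0, lam, rfl, hlam⟩

theorem IsOpen.exists_disc (hΩ : IsOpen Ω) (hx : x ∈ Ω) (v : E) :
    ∃ φ : ℂ → E, DifferentiableOn ℂ φ (ball 0 1) ∧ MapsTo φ (ball 0 1) Ω ∧ φ 0 = x ∧
      ∃ lam : ℂ, lam • fderivWithin ℂ φ (ball 0 1) 0 1 = v := by
  obtain ⟨ε, hε, hball⟩ := Metric.isOpen_iff.mp
    (hΩ.preimage (by fun_prop : Continuous fun z : ℂ => x + z • v)) 0 (by simpa using hx)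
  have hε' : (ε : ℂ) ≠ 0 := Complex.ofReal_ne_zero.mpr hε.ne'
  have hderiv : HasDerivAt (fun z : ℂ => x + (ε * z) • v) ((ε : ℂ) • v) 0 := by
    simpa using (((hasDerivAt_id (0 : ℂ)).const_mul (ε : ℂ)).smul_const v).const_add x
  refine ⟨fun z => x + (ε * z) • v, by fun_prop, fun z hz => hball ?_, by simp, (ε : ℂ)⁻¹, ?_⟩
  · simpa [norm_mul, abs_of_pos hε] using mul_lt_mul_of_pos_left (mem_ball_zero_iff.mp hz) hε
  · rw [fderivWithin_of_isOpen isOpen_ball (mem_ball_self one_pos), fderiv_apply_one_eq_deriv,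
      hderiv.deriv, inv_smul_smul₀ hε']

theorem le_kobMetric {b : ℝ} (hΩ : IsOpen Ω) (hx : x ∈ Ω)
    (h : ∀ φ : ℂ → E, DifferentiableOn ℂ φ (ball 0 1) → MapsTo φ (ball 0 1) Ω → φ 0 = x →
      ∀ lam : ℂ, lam • fderivWithin ℂ φ (ball 0 1) 0 1 = v → b ≤ ‖lam‖) :
    b ≤ kobMetric Ω x v := by
  -- a competitor must exist, since `sInf ∅ = 0`
  obtain ⟨φ, hφ, hφΩ, hφ0, lam, hlam⟩ := hΩ.exists_disc hx v
  refine le_csInf ⟨_, φ, hφ, hφΩ, hφ0, lam, rfl, hlam⟩ ?_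
  rintro _ ⟨φ, hφ, hφΩ, hφ0, lam, rfl, hlam⟩
  exact h φ hφ hφΩ hφ0 lam hlam

theorem kobMetric_le_inv_norm_mul {c : ℂ} (hΩ : IsOpen Ω) (hx : x ∈ Ω) (hc : c ≠ 0)
    (h : ∀ φ : ℂ → E, DifferentiableOn ℂ φ (ball 0 1) → MapsTo φ (ball 0 1) Ω → φ 0 = x →
      ∃ ψ : ℂ → E, DifferentiableOn ℂ ψ (ball 0 1) ∧ MapsTo ψ (ball 0 1) Ω' ∧ ψ 0 = x ∧
        fderivWithin ℂ ψ (ball 0 1) 0 = c • fderivWithin ℂ φ (ball 0 1) 0) (v : E) :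
    kobMetric Ω' x v ≤ ‖c‖⁻¹ * kobMetric Ω x v := by
  rw [le_inv_mul_iff₀ (norm_pos_iff.mpr hc)]
  refine le_kobMetric hΩ hx fun φ hφ hφΩ hφ0 lam hlam => ?_
  obtain ⟨ψ, hψ, hψΩ', hψ0, hψ'⟩ := h φ hφ hφΩ hφ0
  have hψlam : (lam / c) • fderivWithin ℂ ψ (ball 0 1) 0 1 = v := by
    rw [hψ', smul_apply, smul_smul, div_mul_cancel₀ _ hc, hlam]
  calc ‖c‖ * kobMetric Ω' x v ≤ ‖c‖ * ‖lam / c‖ := by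
        gcongr; exact kobMetric_le_norm hψ hψΩ' hψ0 hψlam
    _ = ‖lam‖ := by rw [norm_div, mul_div_cancel₀ _ (norm_ne_zero_iff.mpr hc)]

end Kobayashi

theorem retract_dilation_disc {E : Type*} [NormedAddCommGroup E] [NormedSpace ℂ E] {U X W : Set E}
    {ρ : E → E} {φ : ℂ → E} {c : ℂ} {r : ℝ} (hr : 0 < r) (hρ : DifferentiableOn ℂ ρ W)
    (hret : ∀ x ∈ U, ρ x = x) (hc : ∀ p ∈ U, ∀ y ∈ U, c • (y - p) + p ∈ ball y r)
    (hrW : ∀ x ∈ U, ball x r ⊆ W) (hrX : ∀ x ∈ U, ρ '' ball x r ⊆ X)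
    (hφ : DifferentiableOn ℂ φ (ball 0 1)) (hφU : MapsTo φ (ball 0 1) U) :
    MapsTo (fun ζ => ρ (c • (φ ζ - φ 0) + φ 0)) (ball 0 1) X ∧
      DifferentiableOn ℂ (fun ζ => ρ (c • (φ ζ - φ 0) + φ 0)) (ball 0 1) ∧
      (fun ζ => ρ (c • (φ ζ - φ 0) + φ 0)) 0 = φ 0 ∧
      fderivWithin ℂ (fun ζ => ρ (c • (φ ζ - φ 0) + φ 0)) (ball 0 1) 0 =
        c • fderivWithin ℂ φ (ball 0 1) 0 := by
  have h0 : (0 : ℂ) ∈ ball (0 : ℂ) 1 := mem_ball_self one_pos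
  have hball : ∀ ζ ∈ ball (0 : ℂ) 1, c • (φ ζ - φ 0) + φ 0 ∈ ball (φ ζ) r :=
    fun ζ hζ => hc _ (hφU h0) _ (hφU hζ)
  have hW : W ∈ 𝓝 (φ 0) := mem_of_superset (ball_mem_nhds _ hr) (hrW _ (hφU h0))
  have hfix : ρ ∘ φ =ᶠ[𝓝 0] φ :=
    eventually_of_mem (ball_mem_nhds 0 one_pos) fun ζ hζ => hret _ (hφU hζ)
  refine ⟨fun ζ hζ => hrX _ (hφU hζ) (mem_image_of_mem ρ (hball ζ hζ)), ?_,
    by simp [hret _ (hφU h0)], ?_⟩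
  · exact hρ.comp (((hφ.sub_const _).const_smul c).add_const _)
      fun ζ hζ => hrW _ (hφU hζ) (hball ζ hζ)
  · rw [fderivWithin_of_isOpen isOpen_ball h0, fderivWithin_of_isOpen isOpen_ball h0]
    exact fderiv_comp_smul_sub_add_of_eventuallyEq c (hρ.differentiableAt hW)
      (hφ.differentiableAt (ball_mem_nhds 0 one_pos)) hfix

theorem kobayashi_dilation_general {N : ℕ} (M W X U : Set (Fin N → ℂ))
    (ρ : (Fin N → ℂ) → (Fin N → ℂ)) (hρ : DifferentiableOn ℂ ρ W)
    (hret : ∀ x ∈ M, ρ x = x)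
    (hXM : X ⊆ M)
    (hUo : IsOpen U) (hUX : closure U ⊆ X)
    (R : ℝ) (hR : 0 < R) (hRU : ∀ x ∈ U, U ⊆ ball x R)
    (r : ℝ) (hr : 0 < r) (hrW : ∀ x ∈ U, ball x r ⊆ W)
    (hrX : ∀ x ∈ U, ρ '' ball x r ⊆ X) :
    (∀ (a : Fin N → ℂ), ∀ φ : ℂ → (Fin N → ℂ),
      DifferentiableOn ℂ φ (ball 0 1) → MapsTo φ (ball 0 1) U → φ 0 = a →
      (MapsTo (fun ζ => ρ (((1 + r / R : ℝ) : ℂ) • (φ ζ - φ 0) + φ 0)) (ball 0 1) X ∧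
       DifferentiableOn ℂ (fun ζ => ρ (((1 + r / R : ℝ) : ℂ) • (φ ζ - φ 0) + φ 0)) (ball 0 1) ∧
       (fun ζ => ρ (((1 + r / R : ℝ) : ℂ) • (φ ζ - φ 0) + φ 0)) 0 = a ∧
       fderivWithin ℂ (fun ζ => ρ (((1 + r / R : ℝ) : ℂ) • (φ ζ - φ 0) + φ 0)) (ball 0 1) 0 =
         ((1 + r / R : ℝ) : ℂ) • fderivWithin ℂ φ (ball 0 1) 0)) ∧
    ∀ a ∈ U, ∀ v : Fin N → ℂ, kobMetric X a v ≤ (1 + r / R)⁻¹ * kobMetric U a v := by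
  have hretU : ∀ x ∈ U, ρ x = x := fun x hx => hret x (hXM (hUX (subset_closure hx)))
  have hc : ∀ p ∈ U, ∀ y ∈ U, ((1 + r / R : ℝ) : ℂ) • (y - p) + p ∈ ball y r :=
    fun p hp y hy => smul_sub_add_mem_ball hr hR (hRU y hy hp)
  refine ⟨?_, fun a ha v => ?_⟩
  · rintro a φ hφ hφU rfl
    exact retract_dilation_disc hr hρ hretU hc hrW hrX hφ hφU
  have hnorm : ‖((1 + r / R : ℝ) : ℂ)‖ = 1 + r / R := by
    rw [Complex.norm_real, Real.norm_of_nonneg (by positivity)]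
  rw [← hnorm]
  have hc0 : ((1 + r / R : ℝ) : ℂ) ≠ 0 := Complex.ofReal_ne_zero.mpr (by positivity)
  refine kobMetric_le_inv_norm_mul hUo ha hc0 (fun φ hφ hφU hφ0 => ?_) v
  obtain ⟨hψX, hψ, hψ0, hψ'⟩ := retract_dilation_disc hr hρ hretU hc hrW hrX hφ hφU
  exact ⟨_, hψ, hψX, hψ0.trans hφ0, hψ'⟩

/-- The key dilation construction: `M` a closed (complex sub)manifold of `ℂᴺ`, `W ⊇ M` an open
neighborhood with a holomorphic retraction `ρ : W → M`, `X ⊂ M` a domain, `U ⊂ X` relatively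
compact, `R > 0` with `U ⊂ B(x,R)` for all `x ∈ U`, `r > 0` with `B(x,r) ⊂ W` and
`ρ(B(x,r)) ⊂ X` for all `x ∈ U`. Then for every holomorphic `φ : Δ → U` with `φ(0) = a`, the map
`ψ(ζ) = ρ((1 + r/R)(φ(ζ) − φ(0)) + φ(0))` is a well-defined holomorphic map `Δ → X` with
`ψ(0) = a` and `ψ'(0) = (1 + r/R)·φ'(0)`; consequently
`F_X(a,v) ≤ (1 + r/R)⁻¹ · F_U(a,v)` for all `a ∈ U` and `v`. -/
theorem kobayashi_dilation {N : ℕ} (M W X U : Set (Fin N → ℂ))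
    (hM : IsClosed M) (hWo : IsOpen W) (hMW : M ⊆ W)
    (ρ : (Fin N → ℂ) → (Fin N → ℂ)) (hρ : DifferentiableOn ℂ ρ W)
    (hρM : MapsTo ρ W M) (hret : ∀ x ∈ M, ρ x = x)
    (hXo : IsOpen X) (hXconn : IsPreconnected X) (hXM : X ⊆ M)
    (hUo : IsOpen U) (hUX : closure U ⊆ X) (hUc : IsCompact (closure U))
    (R : ℝ) (hR : 0 < R) (hRU : ∀ x ∈ U, U ⊆ ball x R)
    (r : ℝ) (hr : 0 < r) (hrW : ∀ x ∈ U, ball x r ⊆ W)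
    (hrX : ∀ x ∈ U, ρ '' ball x r ⊆ X) :
    (∀ (a : Fin N → ℂ), ∀ φ : ℂ → (Fin N → ℂ),
      DifferentiableOn ℂ φ (ball 0 1) → MapsTo φ (ball 0 1) U → φ 0 = a →
      (MapsTo (fun ζ => ρ (((1 + r / R : ℝ) : ℂ) • (φ ζ - φ 0) + φ 0)) (ball 0 1) X ∧
       DifferentiableOn ℂ (fun ζ => ρ (((1 + r / R : ℝ) : ℂ) • (φ ζ - φ 0) + φ 0)) (ball 0 1) ∧
       (fun ζ => ρ (((1 + r / R : ℝ) : ℂ) • (φ ζ - φ 0) + φ 0)) 0 = a ∧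
       fderivWithin ℂ (fun ζ => ρ (((1 + r / R : ℝ) : ℂ) • (φ ζ - φ 0) + φ 0)) (ball 0 1) 0 =
         ((1 + r / R : ℝ) : ℂ) • fderivWithin ℂ φ (ball 0 1) 0)) ∧
    ∀ a ∈ U, ∀ v : Fin N → ℂ, kobMetric X a v ≤ (1 + r / R)⁻¹ * kobMetric U a v :=
  kobayashi_dilation_general M W X U ρ hρ hret hXM hUo hUX R hR hRU r hr hrW hrX
end

section
/- Let X be a bounded domain in ℂ (one complex dimension) and U ⋐ X open. Then there exists k < 1 such that for every a ∈ U and v ∈ ℂ, sup{|φ'(a)·v| : φ : X → Δ holomorphic} ≤ k · sup{|ψ'(a)·v| : ψ : U → Δ holomorphic}. -/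
/-!
Write `mobius p q = (q - p) / (1 - p̄ q)` for the disc automorphism sending `p` to `0`. By the
Schwarz lemma on small discs, points of `X` that are close are at Poincaré distance at most
`artanh (1/2)` under every holomorphic `φ : X → Δ`; the hyperbolic triangle inequality, the
connectedness of `X` and the compactness of `closure U` then bound the Carathéodory distance of
`X` on `U × U` by some `M`. Given `φ : X → Δ` and `a ∈ U`, the recentred map
`ψ = mobius (φ a) ∘ φ` satisfies `|ψ| ≤ tanh M < k := tanh (M + 1)` on `U` and
`|ψ'(a)| = |φ'(a)| / (1 - |φ a|²) ≥ |φ'(a)|`, so `ψ / k : U → Δ` witnesses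
`|φ'(a) v| ≤ k E_U(a, v)`.
-/

open Metric Set Filter Topology ComplexConjugate
open Real (artanh tanh)

namespace Caratheodory

noncomputable def mobius (p q : ℂ) : ℂ := (q - p) / (1 - conj p * q)

lemma artanh_add {x y : ℝ} (hx : x ∈ Ioo (-1) 1) (hy : y ∈ Ioo (-1) 1) :
    artanh x + artanh y = artanh ((x + y) / (1 + x * y)) := by
  obtain ⟨hx₁, hx₂⟩ := hx
  obtain ⟨hy₁, hy₂⟩ := hy
  have hxy : 0 < 1 + x * y := by nlinarith
  have hu₁ : 1 + (x + y) / (1 + x * y) = (1 + x) * (1 + y) / (1 + x * y) := by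
    field_simp; ring
  have hu₂ : 1 - (x + y) / (1 + x * y) = (1 - x) * (1 - y) / (1 + x * y) := by
    field_simp; ring
  have hu : (x + y) / (1 + x * y) ∈ Icc (-1) 1 := by
    constructor
    · have : 0 ≤ 1 + (x + y) / (1 + x * y) := by
        rw [hu₁]; exact div_nonneg (by nlinarith) hxy.le
      linarith
    · have : 0 ≤ 1 - (x + y) / (1 + x * y) := by
        rw [hu₂]; exact div_nonneg (by nlinarith) hxy.le
      linarith
  rw [Real.artanh_eq_half_log ⟨by linarith, hx₂.le⟩, Real.artanh_eq_half_log ⟨by linarith, hy₂.le⟩,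
    Real.artanh_eq_half_log hu, hu₁, hu₂, div_div_div_cancel_right₀ hxy.ne', mul_div_mul_comm,
    Real.log_mul (div_pos (by linarith) (by linarith)).ne'
      (div_pos (by linarith) (by linarith)).ne', mul_add]

lemma tanh_pos {x : ℝ} (hx : 0 < x) : 0 < tanh x := by
  rw [Real.tanh_eq_sinh_div_cosh]
  exact div_pos (Real.sinh_pos_iff.2 hx) (Real.cosh_pos x)

lemma sSup_le_mul_sSup {A B : Set ℝ} {k : ℝ} (hk : 0 ≤ k) (hB : BddAbove B)
    (hB₀ : ∀ s ∈ B, 0 ≤ s) (h : ∀ r ∈ A, ∃ s ∈ B, r ≤ k * s) : sSup A ≤ k * sSup B :=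
  Real.sSup_le (fun r hr => by
      obtain ⟨s, hs, hrs⟩ := h r hr
      exact hrs.trans (mul_le_mul_of_nonneg_left (le_csSup hB hs) hk))
    (mul_nonneg hk (Real.sSup_nonneg hB₀))

section Mobius

variable {p q s : ℂ}

lemma one_sub_conj_mul_ne_zero (hp : ‖p‖ < 1) (hq : ‖q‖ ≤ 1) : 1 - conj p * q ≠ 0 := by
  refine sub_ne_zero.2 fun h => ?_
  have : ‖conj p * q‖ < 1 := by
    rw [norm_mul, RCLike.norm_conj]
    nlinarith [norm_nonneg p, norm_nonneg q]
  rw [← h, norm_one] at this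
  exact lt_irrefl _ this

lemma normSq_one_sub_conj_mul_sub_normSq_sub (p q : ℂ) :
    Complex.normSq (1 - conj p * q) - Complex.normSq (q - p) =
      (1 - Complex.normSq p) * (1 - Complex.normSq q) := by
  simp only [Complex.normSq_apply, Complex.sub_re, Complex.sub_im, Complex.mul_re,
    Complex.mul_im, Complex.one_re, Complex.one_im, Complex.conj_re, Complex.conj_im]
  ring

lemma norm_mobius_lt_one (hp : ‖p‖ < 1) (hq : ‖q‖ < 1) : ‖mobius p q‖ < 1 := by
  have hD := one_sub_conj_mul_ne_zero hp hq.le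
  rw [mobius, norm_div, div_lt_one (norm_pos_iff.2 hD), ← sq_lt_sq₀ (norm_nonneg _)
    (norm_nonneg _), Complex.sq_norm, Complex.sq_norm, ← sub_pos,
    normSq_one_sub_conj_mul_sub_normSq_sub, ← Complex.sq_norm, ← Complex.sq_norm]
  have := norm_nonneg p
  have := norm_nonneg q
  apply mul_pos <;> nlinarith

@[simp]
lemma mobius_self (p : ℂ) : mobius p p = 0 := by simp [mobius]

lemma norm_mobius_comm (p q : ℂ) : ‖mobius p q‖ = ‖mobius q p‖ := by
  have : 1 - conj q * p = conj (1 - conj p * q) := by simp [mul_comm]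
  rw [mobius, mobius, norm_div, norm_div, this, RCLike.norm_conj, norm_sub_rev]

lemma mul_one_add_conj_mul_mobius (hp : ‖p‖ < 1) (hq : ‖q‖ < 1) :
    q * (1 + conj p * mobius p q) = p + mobius p q := by
  have hD : 1 - q * conj p ≠ 0 := by rw [mul_comm]; exact one_sub_conj_mul_ne_zero hp hq.le
  rw [mobius]
  field_simp
  ring

lemma norm_add_mul_le (hp : ‖p‖ ≤ 1) (hs : ‖s‖ ≤ 1) :
    ‖p + s‖ * (1 + ‖p‖ * ‖s‖) ≤ (‖p‖ + ‖s‖) * ‖1 + conj p * s‖ := by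
  set P := ‖p‖
  set S := ‖s‖
  set x := (conj p * s).re
  have hx : x ≤ P * S := by
    have := Complex.re_le_norm (conj p * s)
    rwa [norm_mul, RCLike.norm_conj] at this
  have hnum : ‖p + s‖ ^ 2 = P ^ 2 + S ^ 2 + 2 * x := by
    simp only [P, S, x, Complex.sq_norm, Complex.normSq_apply, Complex.add_re, Complex.add_im,
      Complex.mul_re, Complex.conj_re, Complex.conj_im]
    ring
  have hden : ‖1 + conj p * s‖ ^ 2 = 1 + P ^ 2 * S ^ 2 + 2 * x := by
    simp only [P, S, x, Complex.sq_norm, Complex.normSq_apply, Complex.add_re, Complex.add_im,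
      Complex.mul_re, Complex.mul_im, Complex.conj_re, Complex.conj_im, Complex.one_re,
      Complex.one_im]
    ring
  have hP := norm_nonneg p
  have hS := norm_nonneg s
  -- the difference of the squares is `2 (x - PS) ((1 + PS)² - (P + S)²)`, and `x ≤ PS`
  have hgap : 0 ≤ (1 + P * S) ^ 2 - (P + S) ^ 2 := by
    nlinarith [mul_nonneg (sub_nonneg.2 hp) (sub_nonneg.2 hs)]
  refine le_of_pow_le_pow_left₀ two_ne_zero (by positivity) ?_
  rw [mul_pow, mul_pow, hnum, hden]
  nlinarith [mul_nonneg (sub_nonneg.2 hx) hgap]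

lemma artanh_norm_le_add (hp : ‖p‖ < 1) (hq : ‖q‖ < 1) :
    artanh ‖q‖ ≤ artanh ‖p‖ + artanh ‖mobius p q‖ := by
  set s := mobius p q
  have hs : ‖s‖ < 1 := norm_mobius_lt_one hp hq
  have hP := norm_nonneg p
  have hS := norm_nonneg s
  have hE : 0 < ‖1 + conj p * s‖ := by
    have := one_sub_conj_mul_ne_zero (p := -p) (by rwa [norm_neg]) hs.le
    simpa using this
  have hq_le : ‖q‖ ≤ (‖p‖ + ‖s‖) / (1 + ‖p‖ * ‖s‖) := by
    rw [le_div_iff₀ (by positivity), ← mul_le_mul_iff_left₀ hE]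
    calc ‖q‖ * (1 + ‖p‖ * ‖s‖) * ‖1 + conj p * s‖
        = ‖p + s‖ * (1 + ‖p‖ * ‖s‖) := by
          rw [mul_right_comm, ← norm_mul, mul_one_add_conj_mul_mobius hp hq]
      _ ≤ (‖p‖ + ‖s‖) * ‖1 + conj p * s‖ := norm_add_mul_le hp.le hs.le
  rw [artanh_add ⟨by linarith, hp⟩ ⟨by linarith, hs⟩]
  refine Real.artanh_le_artanh (by linarith [norm_nonneg q]) ?_ hq_le
  rw [div_lt_one (by positivity)]
  nlinarith [mul_pos (sub_pos.2 hp) (sub_pos.2 hs)]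

end Mobius

section Holomorphic

variable {X : Set ℂ} {φ : ℂ → ℂ} {b : ℂ} {r : ℝ}

lemma differentiableOn_mobius_comp (hφ : DifferentiableOn ℂ φ X) (hφX : MapsTo φ X (ball 0 1))
    (hb : ‖b‖ < 1) : DifferentiableOn ℂ (fun z => mobius b (φ z)) X :=
  (hφ.sub_const b).div ((differentiableOn_const 1).sub ((differentiableOn_const _).mul hφ))
    fun _ hz => one_sub_conj_mul_ne_zero hb (mem_ball_zero_iff.1 (hφX hz)).le

lemma mapsTo_mobius_comp (hφX : MapsTo φ X (ball 0 1)) (hb : ‖b‖ < 1) :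
    MapsTo (fun z => mobius b (φ z)) X (ball 0 1) := fun _ hz =>
  mem_ball_zero_iff.2 (norm_mobius_lt_one hb (mem_ball_zero_iff.1 (hφX hz)))

lemma hasDerivAt_mobius_self (hb : ‖b‖ < 1) : HasDerivAt (mobius b) (1 - conj b * b)⁻¹ b := by
  have hD := one_sub_conj_mul_ne_zero hb hb.le
  have h : HasDerivAt (fun q => (q - b) / (1 - conj b * q))
      ((1 * (1 - conj b * b) - (b - b) * -(conj b * 1)) / (1 - conj b * b) ^ 2) b :=
    ((hasDerivAt_id' b).sub_const b).div ((hasDerivAt_id' b).const_mul (conj b) |>.const_sub 1) hD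
  refine h.congr_deriv ?_
  rw [sub_self, zero_mul, sub_zero, one_mul, sq, div_mul_cancel_left₀ hD]

lemma norm_mobius_le_dist_div (hφ : DifferentiableOn ℂ φ (ball b r))
    (hφX : MapsTo φ (ball b r) (ball 0 1)) {z : ℂ} (hz : z ∈ ball b r) :
    ‖mobius (φ b) (φ z)‖ ≤ dist z b / r := by
  have hb : ‖φ b‖ < 1 := mem_ball_zero_iff.1 (hφX (mem_ball_self (pos_of_mem_ball hz)))
  have h := Complex.dist_le_div_mul_dist_of_mapsTo_ball (R₂ := 1)
    (differentiableOn_mobius_comp hφ hφX hb)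
    (by simpa using (mapsTo_mobius_comp hφX hb).mono_right ball_subset_closedBall) hz
  simpa [div_eq_inv_mul] using h

end Holomorphic

/-- The Carathéodory distance of `X` between `z` and `w`, the supremum over holomorphic
`φ : X → Δ` of the Poincaré distance `artanh ‖mobius (φ z) (φ w)‖`, is at most `M`. -/
def CaratheodoryDistLE (X : Set ℂ) (z w : ℂ) (M : ℝ) : Prop :=
  ∀ φ : ℂ → ℂ, DifferentiableOn ℂ φ X → MapsTo φ X (ball 0 1) → artanh ‖mobius (φ z) (φ w)‖ ≤ M

namespace CaratheodoryDistLE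

variable {X : Set ℂ} {x z w : ℂ} {M N : ℝ}

lemma mono (h : CaratheodoryDistLE X z w M) (hMN : M ≤ N) : CaratheodoryDistLE X z w N :=
  fun φ hφ hφX => (h φ hφ hφX).trans hMN

lemma symm (h : CaratheodoryDistLE X z w M) : CaratheodoryDistLE X w z M := by
  intro φ hφ hφX
  rw [norm_mobius_comm]
  exact h φ hφ hφX

lemma nonneg (h : CaratheodoryDistLE X z w M) : 0 ≤ M := by
  simpa using h (fun _ => 0) (differentiableOn_const 0) fun _ _ => mem_ball_self one_pos

lemma trans (h₁ : CaratheodoryDistLE X z x M) (h₂ : CaratheodoryDistLE X x w N) (hz : z ∈ X)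
    (hx : x ∈ X) (hw : w ∈ X) : CaratheodoryDistLE X z w (M + N) := by
  intro φ hφ hφX
  have hφz : ‖φ z‖ < 1 := mem_ball_zero_iff.1 (hφX hz)
  set ψ : ℂ → ℂ := fun u => mobius (φ z) (φ u)
  have hψ : DifferentiableOn ℂ ψ X := differentiableOn_mobius_comp hφ hφX hφz
  have hψX : MapsTo ψ X (ball 0 1) := mapsTo_mobius_comp hφX hφz
  calc artanh ‖ψ w‖ ≤ artanh ‖ψ x‖ + artanh ‖mobius (ψ x) (ψ w)‖ :=
        artanh_norm_le_add (mem_ball_zero_iff.1 (hψX hx)) (mem_ball_zero_iff.1 (hψX hw))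
    _ ≤ M + N := add_le_add (h₁ φ hφ hφX) (h₂ ψ hψ hψX)

end CaratheodoryDistLE

section CaratheodoryDist

variable {X K : Set ℂ} {p x z w : ℂ}

lemma eventually_caratheodoryDistLE (hXo : IsOpen X) (hx : x ∈ X) :
    ∀ᶠ w in 𝓝 x, CaratheodoryDistLE X x w (artanh (1 / 2)) := by
  obtain ⟨r, hr, hball⟩ := Metric.isOpen_iff.1 hXo x hx
  filter_upwards [ball_mem_nhds x (half_pos hr)] with w hw φ hφ hφX
  refine Real.artanh_le_artanh (by linarith [norm_nonneg (mobius (φ x) (φ w))]) (by norm_num) ?_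
  calc ‖mobius (φ x) (φ w)‖ ≤ dist w x / r :=
        norm_mobius_le_dist_div (hφ.mono hball) (hφX.mono_left hball)
          (ball_subset_ball (half_le_self hr.le) hw)
    _ ≤ 1 / 2 := by
        rw [div_le_iff₀ hr]
        linarith [mem_ball.1 hw]

lemma exists_caratheodoryDistLE (hXo : IsOpen X) (hX : IsPreconnected X) (hz : z ∈ X)
    (hw : w ∈ X) : ∃ M, CaratheodoryDistLE X z w M :=
  hX.induction₂ (fun z w => ∃ M, CaratheodoryDistLE X z w M)
    (fun _ hx => ((eventually_caratheodoryDistLE hXo hx).filter_mono nhdsWithin_le_nhds).mono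
      fun _ h => ⟨_, h⟩)
    (fun _ _ _ hx hy hz ⟨_, h₁⟩ ⟨_, h₂⟩ => ⟨_, h₁.trans h₂ hx hy hz⟩)
    (fun _ _ _ _ ⟨M, h⟩ => ⟨M, h.symm⟩) hz hw

lemma _root_.IsCompact.exists_caratheodoryDistLE_of_mem (hK : IsCompact K) (hKX : K ⊆ X)
    (hXo : IsOpen X) (hX : IsPreconnected X) (hp : p ∈ X) :
    ∃ M, ∀ w ∈ K, CaratheodoryDistLE X p w M := by
  refine hK.induction_on (p := fun S => ∃ M, ∀ w ∈ S, CaratheodoryDistLE X p w M)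
    ⟨0, by simp⟩ ?_ ?_ ?_
  · rintro S T hST ⟨M, hM⟩
    exact ⟨M, fun w hw => hM w (hST hw)⟩
  · rintro S T ⟨M, hM⟩ ⟨N, hN⟩
    refine ⟨max M N, ?_⟩
    rintro w (hw | hw)
    · exact (hM w hw).mono (le_max_left M N)
    · exact (hN w hw).mono (le_max_right M N)
  · intro x hx
    obtain ⟨M, hM⟩ := exists_caratheodoryDistLE hXo hX hp (hKX hx)
    refine ⟨_, mem_nhdsWithin_of_mem_nhds
      ((hXo.eventually_mem (hKX hx)).and (eventually_caratheodoryDistLE hXo (hKX hx))),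
      M + artanh (1 / 2), ?_⟩
    rintro w ⟨hwX, hw⟩
    exact hM.trans hw hp (hKX hx) hwX

lemma _root_.IsCompact.exists_caratheodoryDistLE (hK : IsCompact K) (hKX : K ⊆ X) (hXo : IsOpen X)
    (hX : IsPreconnected X) : ∃ M, ∀ z ∈ K, ∀ w ∈ K, CaratheodoryDistLE X z w M := by
  rcases K.eq_empty_or_nonempty with rfl | ⟨p, hp⟩
  · exact ⟨0, by simp⟩
  obtain ⟨M, hM⟩ := hK.exists_caratheodoryDistLE_of_mem hKX hXo hX (hKX hp)
  exact ⟨M + M, fun z hz w hw => (hM z hz).symm.trans (hM w hw) (hKX hz) (hKX hp) (hKX hw)⟩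

end CaratheodoryDist

section Derivative

variable {X U : Set ℂ} {φ : ℂ → ℂ} {a b v : ℂ} {M : ℝ}

lemma one_le_norm_inv_one_sub_conj_mul_self (hb : ‖b‖ < 1) : 1 ≤ ‖(1 - conj b * b)⁻¹‖ := by
  have hb2 : ‖b‖ ^ 2 < 1 := by nlinarith [norm_nonneg b]
  rw [Complex.conj_mul', ← Complex.ofReal_pow, ← Complex.ofReal_one, ← Complex.ofReal_sub,
    norm_inv, Complex.norm_real, Real.norm_of_nonneg (by linarith)]
  exact one_le_inv₀ (by linarith) |>.2 (by linarith [sq_nonneg ‖b‖])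

lemma norm_fderiv_apply_le_mobius_comp (hφ : DifferentiableAt ℂ φ a) (hb : ‖φ a‖ < 1) (v : ℂ) :
    ‖fderiv ℂ φ a v‖ ≤ ‖fderiv ℂ (fun z => mobius (φ a) (φ z)) a v‖ := by
  have h : HasFDerivAt (fun z => mobius (φ a) (φ z)) _ a :=
    (hasDerivAt_mobius_self hb).comp_hasFDerivAt a hφ.hasFDerivAt
  rw [h.fderiv, smul_apply, norm_smul]
  exact le_mul_of_one_le_left (norm_nonneg _) (one_le_norm_inv_one_sub_conj_mul_self hb)

/-- The infinitesimal Carathéodory metric `E_X(a, v)` is the supremum of this set. -/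
def caratheodoryNorms (X : Set ℂ) (a v : ℂ) : Set ℝ :=
  {r | ∃ φ : ℂ → ℂ, DifferentiableOn ℂ φ X ∧ MapsTo φ X (ball 0 1) ∧ r = ‖fderivWithin ℂ φ X a v‖}

lemma bddAbove_caratheodoryNorms (hUo : IsOpen U) (ha : a ∈ U) (v : ℂ) :
    BddAbove (caratheodoryNorms U a v) := by
  obtain ⟨ρ, hρ, hball⟩ := Metric.isOpen_iff.1 hUo a ha
  refine ⟨2 / ρ * ‖v‖, ?_⟩
  rintro _ ⟨ψ, hψ, hψU, rfl⟩
  rw [fderivWithin_of_isOpen hUo ha]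
  refine (ContinuousLinearMap.le_opNorm _ v).trans (mul_le_mul_of_nonneg_right ?_ (norm_nonneg v))
  refine Complex.norm_fderiv_le_div_of_mapsTo_ball (hψ.mono hball) (fun z hz => ?_) hρ
  rw [mem_closedBall, dist_eq_norm]
  linarith [norm_sub_le (ψ z) (ψ a), mem_ball_zero_iff.1 (hψU (hball hz)),
    mem_ball_zero_iff.1 (hψU ha)]

lemma exists_mem_caratheodoryNorms_le_tanh_mul (hXo : IsOpen X) (hUo : IsOpen U) (hUX : U ⊆ X)
    (ha : a ∈ U) (hM : ∀ z ∈ U, CaratheodoryDistLE X a z M) {r : ℝ}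
    (hr : r ∈ caratheodoryNorms X a v) :
    ∃ s ∈ caratheodoryNorms U a v, r ≤ tanh (M + 1) * s := by
  obtain ⟨φ, hφ, hφX, rfl⟩ := hr
  have haX := hUX ha
  have hb : ‖φ a‖ < 1 := mem_ball_zero_iff.1 (hφX haX)
  set k := tanh (M + 1)
  have hk : 0 < k := tanh_pos (by linarith [(hM a ha).nonneg])
  set ψ : ℂ → ℂ := fun z => mobius (φ a) (φ z)
  have hψ : DifferentiableOn ℂ ψ X := differentiableOn_mobius_comp hφ hφX hb
  have hψk : ∀ z ∈ U, ‖ψ z‖ < k := by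
    intro z hz
    have hψz : ‖ψ z‖ < 1 := norm_mobius_lt_one hb (mem_ball_zero_iff.1 (hφX (hUX hz)))
    rw [← Real.artanh_lt_artanh_iff ⟨by linarith [norm_nonneg (ψ z)], hψz⟩
      ⟨Real.neg_one_lt_tanh _, Real.tanh_lt_one _⟩, Real.artanh_tanh]
    linarith [hM z hz φ hφ hφX]
  have hk_norm : ‖(k : ℂ)⁻¹‖ = k⁻¹ := by rw [norm_inv, Complex.norm_real, Real.norm_of_nonneg hk.le]
  refine ⟨_, ⟨fun z => (k : ℂ)⁻¹ * ψ z, (hψ.mono hUX).const_mul _, fun z hz => ?_, rfl⟩, ?_⟩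
  · rw [mem_ball_zero_iff, norm_mul, hk_norm, inv_mul_lt_one₀ hk]
    exact hψk z hz
  · have hψa : DifferentiableAt ℂ ψ a := hψ.differentiableAt (hXo.mem_nhds haX)
    rw [fderivWithin_of_isOpen hXo haX, fderivWithin_of_isOpen hUo ha, fderiv_const_mul hψa,
      smul_apply, norm_smul, hk_norm, mul_inv_cancel_left₀ hk.ne']
    exact norm_fderiv_apply_le_mobius_comp (hφ.differentiableAt (hXo.mem_nhds haX)) hb v

end Derivative

end Caratheodory

open Caratheodory in
theorem caratheodory_metric_contraction_dim_one_general (X U : Set ℂ)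
    (hXo : IsOpen X) (hXconn : IsConnected X)
    (hUo : IsOpen U) (hUX : closure U ⊆ X) (hUc : IsCompact (closure U)) :
    ∃ k : ℝ, k < 1 ∧ ∀ a ∈ U, ∀ v : ℂ,
      sSup {r : ℝ | ∃ φ : ℂ → ℂ, DifferentiableOn ℂ φ X ∧ MapsTo φ X (ball 0 1) ∧
          r = ‖fderivWithin ℂ φ X a v‖}
        ≤ k * sSup {r : ℝ | ∃ ψ : ℂ → ℂ, DifferentiableOn ℂ ψ U ∧ MapsTo ψ U (ball 0 1) ∧
          r = ‖fderivWithin ℂ ψ U a v‖} := by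
  obtain ⟨M, hM⟩ := hUc.exists_caratheodoryDistLE hUX hXo hXconn.isPreconnected
  refine ⟨tanh (M + 1), Real.tanh_lt_one _, fun a ha v => ?_⟩
  have haU := subset_closure ha
  have hk : 0 ≤ tanh (M + 1) := (tanh_pos (by linarith [(hM a haU a haU).nonneg])).le
  exact sSup_le_mul_sSup hk (bddAbove_caratheodoryNorms hUo ha v)
    (fun _ ⟨_, _, _, h⟩ => h ▸ norm_nonneg _)
    fun _ hr => exists_mem_caratheodoryNorms_le_tanh_mul hXo hUo (subset_closure.trans hUX) ha
      (fun z hz => hM a haU z (subset_closure hz)) hr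

/-- Let `X` be a bounded domain in `ℂ` and `U ⋐ X` open. Then there exists `k < 1` such that
for every `a ∈ U` and `v ∈ ℂ`,
`sup {|φ'(a)·v| : φ : X → Δ holomorphic} ≤ k · sup {|ψ'(a)·v| : ψ : U → Δ holomorphic}`. -/
theorem caratheodory_metric_contraction_dim_one (X U : Set ℂ)
    (hXo : IsOpen X) (hXconn : IsConnected X) (hXb : Bornology.IsBounded X)
    (hUo : IsOpen U) (hUX : closure U ⊆ X) (hUc : IsCompact (closure U)) :
    ∃ k : ℝ, k < 1 ∧ ∀ a ∈ U, ∀ v : ℂ,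
      sSup {r : ℝ | ∃ φ : ℂ → ℂ, DifferentiableOn ℂ φ X ∧ MapsTo φ X (ball 0 1) ∧
          r = ‖fderivWithin ℂ φ X a v‖}
        ≤ k * sSup {r : ℝ | ∃ ψ : ℂ → ℂ, DifferentiableOn ℂ ψ U ∧ MapsTo ψ U (ball 0 1) ∧
          r = ‖fderivWithin ℂ ψ U a v‖} :=
  caratheodory_metric_contraction_dim_one_general X U hXo hXconn hUo hUX hUc
end
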